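/- Let D be an n×n diagonal matrix with positive diagonal entries and A an entrywise nonnegative n×n matrix. Then w(A)² ≤ w(DA)·w(D⁻¹A), where w denotes the numerical radius. -/

import Mathlib

open scoped Matrix

/-- The numerical radius of an `n × n` complex matrix, viewed as an operator on `ℂⁿ`
with the Euclidean norm. -/
noncomputable def matNumRad {n : ℕ} (M : Matrix (Fin n) (Fin n) ℂ) : ℝ :=
  sSup {r : ℝ | ∃ x : EuclideanSpace ℂ (Fin n), ‖x‖ = 1 ∧
    r = ‖(inner ℂ (Matrix.toEuclideanCLM (𝕜 := ℂ) M x) x : ℂ)‖}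


/-!
For a unit vector `x`, the triangle inequality bounds `‖⟪A x, x⟫‖` by the real quadratic form
`v ⬝ᵥ A *ᵥ v` of the vector of moduli `vᵢ = ‖xᵢ‖`, again a unit vector. Splitting each term
`vᵢ (A v)ᵢ` as `√(cᵢ vᵢ (A v)ᵢ) · √(cᵢ⁻¹ vᵢ (A v)ᵢ)`, Cauchy–Schwarz bounds its square by
`(v ⬝ᵥ D A *ᵥ v) (v ⬝ᵥ D⁻¹ A *ᵥ v)`, and these are values of the quadratic forms of `D A` and
`D⁻¹ A` at the real unit vector `v`, hence at most `w(D A)` and `w(D⁻¹ A)`.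
-/

open Matrix Finset WithLp

section DotProduct

variable {ι K : Type*} [Fintype ι] [Field K] [LinearOrder K] [IsStrictOrderedRing K]

lemma sq_dotProduct_le_dotProduct_mul_mul_dotProduct_inv_mul {u w c : ι → K}
    (huw : ∀ i, 0 ≤ u i * w i) (hc : ∀ i, 0 < c i) :
    (u ⬝ᵥ w) ^ 2 ≤ (u ⬝ᵥ (c * w)) * (u ⬝ᵥ (c⁻¹ * w)) := by
  refine sum_sq_le_sum_mul_sum_of_sq_le_mul univ (fun i _ => ?_) (fun i _ => ?_)
    (fun i _ => le_of_eq ?_)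
  · simpa [mul_left_comm] using mul_nonneg (hc i).le (huw i)
  · simpa [mul_left_comm] using mul_nonneg (inv_nonneg.2 (hc i).le) (huw i)
  · have := (hc i).ne'
    simp only [Pi.mul_apply, Pi.inv_apply]
    field_simp

lemma sq_dotProduct_mulVec_le [DecidableEq ι] {A : Matrix ι ι K} (hA : ∀ i j, 0 ≤ A i j)
    {c v : ι → K} (hc : ∀ i, 0 < c i) (hv : ∀ i, 0 ≤ v i) :
    (v ⬝ᵥ A *ᵥ v) ^ 2 ≤ (v ⬝ᵥ (diagonal c * A) *ᵥ v) * (v ⬝ᵥ (diagonal c⁻¹ * A) *ᵥ v) := by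
  have hdiag (d : ι → K) : diagonal d *ᵥ (A *ᵥ v) = d * (A *ᵥ v) := funext (mulVec_diagonal d _)
  rw [← mulVec_mulVec, ← mulVec_mulVec, hdiag, hdiag]
  refine sq_dotProduct_le_dotProduct_mul_mul_dotProduct_inv_mul (fun i => ?_) hc
  exact mul_nonneg (hv i) (sum_nonneg fun j _ => mul_nonneg (hA i j) (hv j))

end DotProduct

lemma inv_diagonal_of_ne_zero {ι K : Type*} [Fintype ι] [DecidableEq ι] [Field K] {d : ι → K}
    (hd : ∀ i, d i ≠ 0) : (diagonal d)⁻¹ = diagonal d⁻¹ := by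
  refine inv_eq_left_inv ?_
  rw [diagonal_mul_diagonal, ← diagonal_one]
  exact congrArg diagonal (funext fun i => inv_mul_cancel₀ (hd i))

lemma diagonal_ofReal_mul_map_ofReal {ι : Type*} [Fintype ι] [DecidableEq ι] (d : ι → ℝ)
    (A : Matrix ι ι ℝ) :
    diagonal (fun i => (d i : ℂ)) * A.map (fun a => (a : ℂ)) = (diagonal d * A).map (↑) := by
  ext i j
  simp [diagonal_mul]

section Inner

variable {ι : Type*} [Fintype ι]

lemma norm_toLp_ofReal_norm (x : EuclideanSpace ℂ ι) :
    ‖(toLp 2 fun i => ((‖x i‖ : ℝ) : ℂ) : EuclideanSpace ℂ ι)‖ = ‖x‖ := by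
  simp [EuclideanSpace.norm_eq]

variable [DecidableEq ι]

lemma inner_toEuclideanCLM_map_ofReal (B : Matrix ι ι ℝ) (v : ι → ℝ) :
    inner ℂ (toEuclideanCLM (𝕜 := ℂ) (B.map (↑)) (toLp 2 fun i => (v i : ℂ)))
      (toLp 2 fun i => (v i : ℂ)) = ((v ⬝ᵥ B *ᵥ v : ℝ) : ℂ) := by
  have hB : B.map (↑) *ᵥ (fun i => (v i : ℂ)) = fun i => ((B *ᵥ v) i : ℂ) :=
    funext fun i => (Complex.ofRealHom.map_mulVec B v i).symm
  rw [toEuclideanCLM_toLp, EuclideanSpace.inner_eq_star_dotProduct, hB]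
  simp [dotProduct]

lemma norm_inner_toEuclideanCLM_map_ofReal_le {A : Matrix ι ι ℝ} (hA : ∀ i j, 0 ≤ A i j)
    (x : EuclideanSpace ℂ ι) :
    ‖inner ℂ (toEuclideanCLM (𝕜 := ℂ) (A.map (↑)) x) x‖ ≤
      (fun i => ‖x i‖) ⬝ᵥ A *ᵥ (fun i => ‖x i‖) := by
  rw [EuclideanSpace.inner_eq_star_dotProduct, ofLp_toEuclideanCLM]
  refine (norm_sum_le _ _).trans (sum_le_sum fun i _ => ?_)
  rw [norm_mul, Pi.star_apply, norm_star]
  gcongr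
  refine (norm_sum_le _ _).trans (sum_le_sum fun j _ => ?_)
  simp [abs_of_nonneg (hA i j)]

end Inner

section NumericalRadius

variable {n : ℕ}

lemma bddAbove_norm_inner_toEuclideanCLM (M : Matrix (Fin n) (Fin n) ℂ) :
    BddAbove {r : ℝ | ∃ x : EuclideanSpace ℂ (Fin n), ‖x‖ = 1 ∧
      r = ‖(inner ℂ (toEuclideanCLM (𝕜 := ℂ) M x) x : ℂ)‖} := by
  refine ⟨‖toEuclideanCLM (𝕜 := ℂ) M‖, ?_⟩
  rintro _ ⟨x, hx, rfl⟩
  simpa [hx] using (norm_inner_le_norm _ _).trans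
    (mul_le_mul_of_nonneg_right ((toEuclideanCLM (𝕜 := ℂ) M).le_opNorm x) (norm_nonneg x))

lemma matNumRad_nonneg (M : Matrix (Fin n) (Fin n) ℂ) : 0 ≤ matNumRad M :=
  Real.sSup_nonneg <| by rintro _ ⟨x, -, rfl⟩; exact norm_nonneg _

lemma norm_inner_le_matNumRad (M : Matrix (Fin n) (Fin n) ℂ) {x : EuclideanSpace ℂ (Fin n)}
    (hx : ‖x‖ = 1) : ‖inner ℂ (toEuclideanCLM (𝕜 := ℂ) M x) x‖ ≤ matNumRad M :=
  le_csSup (bddAbove_norm_inner_toEuclideanCLM M) ⟨x, hx, rfl⟩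

lemma matNumRad_le {M : Matrix (Fin n) (Fin n) ℂ} {r : ℝ} (hr : 0 ≤ r)
    (h : ∀ x : EuclideanSpace ℂ (Fin n), ‖x‖ = 1 → ‖inner ℂ (toEuclideanCLM (𝕜 := ℂ) M x) x‖ ≤ r) :
    matNumRad M ≤ r :=
  Real.sSup_le (by rintro _ ⟨x, hx, rfl⟩; exact h x hx) hr

lemma abs_dotProduct_mulVec_le_matNumRad (B : Matrix (Fin n) (Fin n) ℝ) {v : Fin n → ℝ}
    (hv : ‖(toLp 2 fun i => (v i : ℂ) : EuclideanSpace ℂ (Fin n))‖ = 1) :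
    |v ⬝ᵥ B *ᵥ v| ≤ matNumRad (B.map (↑)) := by
  rw [← Real.norm_eq_abs, ← Complex.norm_real, ← inner_toEuclideanCLM_map_ofReal]
  exact norm_inner_le_matNumRad _ hv

end NumericalRadius

/-- Matrix case (`m = 2`) of the numerical radius analogue of Cohen's inequality:
for a diagonal `D` with positive diagonal entries and entrywise nonnegative `A`,
`w(A)² ≤ w(DA) · w(D⁻¹A)`. -/
theorem matNumRad_sq_le (n : ℕ) (c : Fin n → ℝ) (hc : ∀ j, 0 < c j)
    (A : Matrix (Fin n) (Fin n) ℝ) (hA : ∀ i j, 0 ≤ A i j) :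
    matNumRad (A.map (fun a => (a : ℂ))) ^ 2 ≤
      matNumRad (Matrix.diagonal (fun j => (c j : ℂ)) * A.map (fun a => (a : ℂ))) *
      matNumRad ((Matrix.diagonal (fun j => (c j : ℂ)))⁻¹ * A.map (fun a => (a : ℂ))) := by
  have hinv : (diagonal fun j => (c j : ℂ))⁻¹ = diagonal fun j => ((c⁻¹ j : ℝ) : ℂ) := by
    rw [inv_diagonal_of_ne_zero fun j => Complex.ofReal_ne_zero.2 (hc j).ne']
    simp
  rw [hinv, diagonal_ofReal_mul_map_ofReal, diagonal_ofReal_mul_map_ofReal]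
  have key : ∀ x : EuclideanSpace ℂ (Fin n), ‖x‖ = 1 →
      ‖inner ℂ (toEuclideanCLM (𝕜 := ℂ) (A.map (↑)) x) x‖ ^ 2 ≤
        matNumRad ((diagonal c * A).map (↑)) * matNumRad ((diagonal c⁻¹ * A).map (↑)) := by
    intro x hx
    set v : Fin n → ℝ := fun i => ‖x i‖
    have hv : ‖(toLp 2 fun i => (v i : ℂ) : EuclideanSpace ℂ (Fin n))‖ = 1 :=
      (norm_toLp_ofReal_norm x).trans hx
    calc ‖inner ℂ (toEuclideanCLM (𝕜 := ℂ) (A.map (↑)) x) x‖ ^ 2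
        ≤ (v ⬝ᵥ A *ᵥ v) ^ 2 := by
          gcongr; exact norm_inner_toEuclideanCLM_map_ofReal_le hA x
      _ ≤ (v ⬝ᵥ (diagonal c * A) *ᵥ v) * (v ⬝ᵥ (diagonal c⁻¹ * A) *ᵥ v) :=
          sq_dotProduct_mulVec_le hA hc fun i => norm_nonneg (x i)
      _ ≤ |v ⬝ᵥ (diagonal c * A) *ᵥ v| * |v ⬝ᵥ (diagonal c⁻¹ * A) *ᵥ v| := by
          rw [← abs_mul]; exact le_abs_self _
      _ ≤ _ := mul_le_mul (abs_dotProduct_mulVec_le_matNumRad _ hv)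
          (abs_dotProduct_mulVec_le_matNumRad _ hv) (abs_nonneg _) (matNumRad_nonneg _)
  rw [← Real.le_sqrt (matNumRad_nonneg _) (mul_nonneg (matNumRad_nonneg _) (matNumRad_nonneg _))]
  exact matNumRad_le (Real.sqrt_nonneg _) fun x hx => Real.le_sqrt_of_sq_le (key x hx)
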